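/- arXiv:math/0207077 — 2 statements merged into one kernel-verified Lean document; each statement's English description precedes it below -/
import Mathlib

section
/- Let F : C → D be a separable functor and T a full subcategory of C. Let C₁ ∈ T, C ∈ C and f : C₁ → C a morphism in C. If F(f) : F(C₁) → F(C) is a right (respectively, left) F(T)-approximation of F(C) in D, then f is a right (respectively, left) T-approximation of C in C. -/
section Approx

open CategoryTheory

variable {D : Type*} [Category D]

/-- `f : C₁ ⟶ X` is a right approximation of `X` with respect to the full
subcategory of objects satisfying `P`: `C₁` satisfies `P` and every morphism
from an object satisfying `P` to `X` factors through `f`. -/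
def IsRightApprox (P : D → Prop) {C₁ X : D} (f : C₁ ⟶ X) : Prop :=
  P C₁ ∧ ∀ (B : D), P B → ∀ g : B ⟶ X, ∃ h : B ⟶ C₁, h ≫ f = g

/-- The full subcategory of objects satisfying `P` is contravariantly finite in `D`
if every object of `D` admits a right `P`-approximation. -/
def ContravariantlyFinite (P : D → Prop) : Prop :=
  ∀ X : D, ∃ (C₁ : D) (f : C₁ ⟶ X), IsRightApprox P f

/-- `f : X ⟶ C₁` is a left approximation of `X` with respect to the full
subcategory of objects satisfying `P`. -/
def IsLeftApprox (P : D → Prop) {X C₁ : D} (f : X ⟶ C₁) : Prop :=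
  P C₁ ∧ ∀ (B : D), P B → ∀ g : X ⟶ B, ∃ h : C₁ ⟶ B, f ≫ h = g

/-- The full subcategory of objects satisfying `P` is covariantly finite in `D`
if every object of `D` admits a left `P`-approximation. -/
def CovariantlyFinite (P : D → Prop) : Prop :=
  ∀ X : D, ∃ (C₁ : D) (f : X ⟶ C₁), IsLeftApprox P f

end Approx

open CategoryTheory

/-- A functor `F : C ⥤ D` is separable if the natural transformation
`Hom_C(-,-) → Hom_D(F -, F -)`, `f ↦ F.map f`, admits a retraction `P` which is
natural in both variables. -/
def SeparableFunctor {C D : Type*} [Category C] [Category D] (F : C ⥤ D) : Prop :=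
  ∃ P : ∀ (X Y : C), (F.obj X ⟶ F.obj Y) → (X ⟶ Y),
    (∀ (X Y : C) (f : X ⟶ Y), P X Y (F.map f) = f) ∧
    (∀ (X' X Y Y' : C) (a : X' ⟶ X) (b : Y ⟶ Y') (g : F.obj X ⟶ F.obj Y),
      P X' Y' (F.map a ≫ g ≫ F.map b) = a ≫ P X Y g ≫ b)

/-- Separable functors reflect approximations: if `F : C ⥤ D` is separable, `T` a
full subcategory of `C`, `C₁` in `T`, then a morphism `f : C₁ ⟶ C` (resp.
`g : C ⟶ C₁`) such that `F f` is a right (resp. left) `F(T)`-approximation of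
`F C` is itself a right (resp. left) `T`-approximation of `C`. -/
theorem approx_of_separableFunctor_approx {C D : Type*} [Category C] [Category D]
    (F : C ⥤ D) (hF : SeparableFunctor F) (T : C → Prop) (C₁ Cob : C) (hC₁ : T C₁) :
    (∀ f : C₁ ⟶ Cob,
      (∀ B : C, T B → ∀ g : F.obj B ⟶ F.obj Cob, ∃ h : F.obj B ⟶ F.obj C₁,
        h ≫ F.map f = g) →
      IsRightApprox T f) ∧
    (∀ f : Cob ⟶ C₁,
      (∀ B : C, T B → ∀ g : F.obj Cob ⟶ F.obj B, ∃ h : F.obj C₁ ⟶ F.obj B,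
        F.map f ≫ h = g) →
      IsLeftApprox T f) := by
  
  obtain ⟨P, hP1, hP2⟩ := hF
  constructor
  · intro f hf
    refine ⟨hC₁, fun B hB g => ?_⟩
    obtain ⟨h, hh⟩ := hf B hB (F.map g)
    refine ⟨P B C₁ h, ?_⟩
    have := hP2 B B C₁ Cob (𝟙 B) f h
    simp only [F.map_id, Category.id_comp] at this
    rw [← this, hh, hP1]
  · intro f hf
    refine ⟨hC₁, fun B hB g => ?_⟩
    obtain ⟨h, hh⟩ := hf B hB (F.map g)
    refine ⟨P C₁ B h, ?_⟩
    have := hP2 Cob C₁ B B f (𝟙 B) h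
    simp only [F.map_id, Category.comp_id] at this
    rw [← this, hh, hP1]
end

section
/- Let R/S be a ring extension, E : R → S an S-bimodule homomorphism that is a right Im(G')-approximation of S as a right S-module, and A = End_S(R) the ring of right S-module endomorphisms of R. Then Hom_S(R,S) = E∘A = { E∘h : h ∈ A } as (S,R)-bimodules. If E is non-degenerate, then the map r ↦ E∘m_r, where m_r : R → R is left multiplication by r, is an (S,R)-bimodule isomorphism from R onto E∘R = { E∘m_r : r ∈ R }. Conversely, if R is isomorphic to E∘R as (S,R)-bimodules, then there exists a non-degenerate S-bimodule homomorphism E₁ : R → S that is a right Im(G')-approximation of S as a right S-module. -/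
open MulOpposite

/-- Let `R/S` be a ring extension (`i : S → R`) and `E : R → S` an `S`-bimodule map
which is a right `Im G'`-approximation of `S` as a right `S`-module (`G'` the
restriction-of-scalars functor from right `R`-modules to right `S`-modules).
Let `A = End_S(R)`. Then:
(1) `Hom_S(R,S) = E ∘ A` as `(S,R)`-bimodules, i.e. every right `S`-linear map
`g : R → S` is of the form `E ∘ h` for a right `S`-linear `h : R → R`;
(2) if `E` is non-degenerate (its kernel contains no nonzero right ideal), then
`r ↦ E ∘ m_r` (with `m_r` left multiplication by `r`) is an injective map of
`(S,R)`-bimodules from `R` onto `E ∘ R`;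
(3) conversely, if `R ≅ E ∘ R` as `(S,R)`-bimodules, then there is a
non-degenerate `S`-bimodule map `E₁ : R → S` which is a right
`Im G'`-approximation of `S` as a right `S`-module. -/
theorem approximation_endomorphisms_and_nondegenerate
    (S R : Type) [Ring S] [Ring R] (i : S →+* R)
    (E : R → S)
    -- `E` is a map of `S`-bimodules
    (hEadd : ∀ x y : R, E (x + y) = E x + E y)
    (hEr : ∀ (s : S) (x : R), E (x * i s) = E x * s)
    (hEl : ∀ (s : S) (x : R), E (i s * x) = s * E x)
    -- `E` is a right `Im G'`-approximation of `S` as a right `S`-module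
    (happrox : ∀ Y : ModuleCat.{0} Rᵐᵒᵖ, ∀ g : Y → S,
      (∀ y z, g (y + z) = g y + g z) →
      (∀ (s : S) (y : Y), g (op (i s) • y) = g y * s) →
      ∃ h : Y → R,
        (∀ y z, h (y + z) = h y + h z) ∧
        (∀ (s : S) (y : Y), h (op (i s) • y) = h y * i s) ∧
        (∀ y, E (h y) = g y)) :
    -- (1) `Hom_S(R,S) = E ∘ A` as `(S,R)`-bimodules
    (∀ g : R → S, (∀ x y, g (x + y) = g x + g y) →
      (∀ (s : S) (x : R), g (x * i s) = g x * s) →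
      ∃ h : R → R, (∀ x y, h (x + y) = h x + h y) ∧
        (∀ (s : S) (x : R), h (x * i s) = h x * i s) ∧
        (∀ x, g x = E (h x))) ∧
    -- (2) if `E` is non-degenerate then `r ↦ E ∘ m_r : R → E ∘ A` is an injective
    -- morphism of `(S,R)`-bimodules onto `E ∘ R`
    ((∀ x : R, (∀ r : R, E (x * r) = 0) → x = 0) →
      Function.Injective (fun r : R => fun x : R => E (r * x)) ∧
      (∀ (s : S) (r x : R), E ((i s * r) * x) = s * E (r * x)) ∧
      (∀ r r' x : R, E ((r * r') * x) = E (r * (r' * x)))) ∧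
    -- (3) if `R ≅ E ∘ R` as `(S,R)`-bimodules then some `S`-bimodule map
    -- `E₁ : R → S` is non-degenerate and a right `Im G'`-approximation of `S`
    ((∃ β : R → (R → S), Function.Injective β ∧
        (∀ x : R, ∃ r : R, β x = fun y => E (r * y)) ∧
        (∀ r : R, ∃ x : R, β x = fun y => E (r * y)) ∧
        (∀ (s : S) (x y : R), β (i s * x) y = s * β x y) ∧
        (∀ r x y : R, β (x * r) y = β x (r * y))) →
      ∃ E₁ : R → S,
        (∀ x y : R, E₁ (x + y) = E₁ x + E₁ y) ∧
        (∀ (s : S) (x : R), E₁ (x * i s) = E₁ x * s) ∧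
        (∀ (s : S) (x : R), E₁ (i s * x) = s * E₁ x) ∧
        (∀ x : R, (∀ r : R, E₁ (x * r) = 0) → x = 0) ∧
        (∀ Y : ModuleCat.{0} Rᵐᵒᵖ, ∀ g : Y → S,
          (∀ y z, g (y + z) = g y + g z) →
          (∀ (s : S) (y : Y), g (op (i s) • y) = g y * s) →
          ∃ h : Y → R,
            (∀ y z, h (y + z) = h y + h z) ∧
            (∀ (s : S) (y : Y), h (op (i s) • y) = h y * i s) ∧
            (∀ y, E₁ (h y) = g y))) := by

  have hE0 : E 0 = 0 := by
    have h := hEadd 0 0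
    rw [add_zero] at h
    exact (left_eq_add.mp h)
  have hEneg : ∀ x : R, E (-x) = - E x := by
    intro x
    have h := hEadd x (-x)
    rw [add_neg_cancel, hE0] at h
    exact eq_neg_of_add_eq_zero_right h.symm
  refine ⟨?_, ?_, ?_⟩
  · -- (1)
    intro g gadd gS
    obtain ⟨h, hadd, hS, hE⟩ := happrox (ModuleCat.of Rᵐᵒᵖ R) g gadd (fun s y => gS s y)
    exact ⟨h, hadd, fun s y => hS s y, fun x => (hE x).symm⟩
  · -- (2)
    intro hnd
    refine ⟨?_, ?_, ?_⟩
    · intro r r' hrr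
      have h : ∀ x, E ((r - r') * x) = 0 := by
        intro x
        have hx : E (r * x) = E (r' * x) := congrFun hrr x
        rw [sub_mul, sub_eq_add_neg, hEadd, hEneg, hx, add_neg_cancel]
      have h0 := hnd (r - r') h
      exact sub_eq_zero.mp h0
    · intro s r x; rw [mul_assoc, hEl]
    · intro r r' x; rw [mul_assoc]
  · -- (3)
    rintro ⟨β, βinj, βrep, βsurj, βS, βR⟩
    obtain ⟨r₁, hr₁⟩ := βrep 1
    have hβ : ∀ x y, β x y = E (r₁ * (x * y)) := by
      intro x y
      have h := βR x 1 y
      rw [one_mul] at h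
      rw [h, hr₁]
    obtain ⟨c, hc⟩ := βsurj 1
    have hc' : ∀ y, E (r₁ * (c * y)) = E y := by
      intro y
      have h := congrFun hc y
      rw [hβ] at h
      rw [h, one_mul]
    refine ⟨fun x => E (r₁ * x), ?_, ?_, ?_, ?_, ?_⟩
    · intro x y
      show E (r₁ * (x + y)) = E (r₁ * x) + E (r₁ * y)
      rw [mul_add, hEadd]
    · intro s x
      show E (r₁ * (x * i s)) = E (r₁ * x) * s
      rw [← mul_assoc, hEr]
    · intro s x
      have h1 := βS s 1 x
      rw [mul_one, hβ, hβ, one_mul] at h1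
      exact h1
    · intro x hx
      have hβ0 : β 0 = β x := by
        funext y
        rw [hβ, hβ, zero_mul, mul_zero, hE0]
        exact (hx y).symm
      exact (βinj hβ0).symm
    · intro Y g gadd gS
      obtain ⟨h, hadd, hS, hE⟩ := happrox Y g gadd gS
      refine ⟨fun y => c * h y, ?_, ?_, ?_⟩
      · intro y z
        show c * h (y + z) = c * h y + c * h z
        rw [hadd, mul_add]
      · intro s y
        show c * h (op (i s) • y) = c * h y * i s
        rw [hS, mul_assoc]
      · intro y
        show E (r₁ * (c * h y)) = g y
        rw [hc', hE]
end
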